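/- arXiv:1106.1815 — 11 statements merged into one kernel-verified Lean document; each statement's English description precedes it below -/
import Mathlib

section
/- Let X, Y be metric spaces, F : X ⇒ Y a set-valued map, and (x̄, ȳ) ∈ Graph F. If F is open at linear rate L > 0 around (x̄, ȳ) (i.e., there exist ε > 0 and neighborhoods U of x̄, V of ȳ such that for every ρ ∈ (0, ε) and every (x, y) ∈ Graph F ∩ (U × V), B(y, ρL) ⊆ F(B(x, ρ))), then F is metrically regular around (x̄, ȳ) with constant L⁻¹, i.e., there exist neighborhoods U' of x̄, V' of ȳ such that for every (x, y) ∈ U' × V', d(x, F⁻¹(y)) ≤ L⁻¹ · d(y, F(x)). -/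
open Metric Set Filter Topology ENNReal

noncomputable def exc {α : Type*} [PseudoEMetricSpace α] (A B : Set α) : ℝ≥0∞ :=
  ⨆ a ∈ A, EMetric.infEdist a B

theorem stmt0 {X Y : Type*} [MetricSpace X] [MetricSpace Y]
    (F : X → Set Y) (x₀ : X) (y₀ : Y) (hxy : y₀ ∈ F x₀) (L : ℝ) (hL : 0 < L)
    (hopen : ∃ ε > (0:ℝ), ∃ U ∈ 𝓝 x₀, ∃ V ∈ 𝓝 y₀, ∀ ρ ∈ Set.Ioo (0:ℝ) ε,
      ∀ x y, y ∈ F x → x ∈ U → y ∈ V →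
        Metric.ball y (ρ * L) ⊆ ⋃ x' ∈ Metric.ball x ρ, F x') :
    ∃ U' ∈ 𝓝 x₀, ∃ V' ∈ 𝓝 y₀, ∀ x ∈ U', ∀ y ∈ V',
      EMetric.infEdist x {x' | y ∈ F x'} ≤
        ENNReal.ofReal L⁻¹ * EMetric.infEdist y (F x) := by
  obtain ⟨ε, hε, U, hU, V, hV, hop⟩ := hopen
  obtain ⟨r, hr, hrU⟩ := Metric.mem_nhds_iff.1 hU
  obtain ⟨s, hs, hsV⟩ := Metric.mem_nhds_iff.1 hV
  have hx₀U : x₀ ∈ U := mem_of_mem_nhds hU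
  have hy₀V : y₀ ∈ V := mem_of_mem_nhds hV
  set m : ℝ := min (s/2) (ε*L/2) with hm
  have hm0 : 0 < m := lt_min (by positivity) (by positivity)
  have hms : m < s := lt_of_le_of_lt (min_le_left _ _) (by linarith)
  have hmε : m < ε * L := lt_of_le_of_lt (min_le_right _ _) (by nlinarith)
  set ρ₁ : ℝ := min (ε/2) (m/(4*L)) with hρ₁
  have hρ₁0 : 0 < ρ₁ := lt_min (by positivity) (by positivity)
  have hρ₁ε : ρ₁ < ε := lt_of_le_of_lt (min_le_left _ _) (by linarith)
  have hρ₁m : ρ₁ ≤ m/(4*L) := min_le_right _ _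
  set a' : ℝ := min r (m/(4*L)) with ha'
  have ha'0 : 0 < a' := lt_min hr (by positivity)
  have ha'r : a' ≤ r := min_le_left _ _
  have ha'm : a' ≤ m/(4*L) := min_le_right _ _
  set δ₀ : ℝ := m/4 with hδ₀
  have hδ₀0 : 0 < δ₀ := by positivity
  set t : ℝ := min (m/4) (ρ₁*L) with ht
  have ht0 : 0 < t := lt_min (by positivity) (by positivity)
  have htm : t ≤ m/4 := min_le_left _ _
  have htρ : t ≤ ρ₁ * L := min_le_right _ _
  set c : ℝ := a' + ρ₁ with hc
  have hc0 : 0 < c := by positivity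
  have hcL : c * L ≤ m/2 := by
    have : c * L ≤ (m/(4*L)) * L + (m/(4*L)) * L := by nlinarith
    have h4 : (m/(4*L)) * L = m/4 := by field_simp
    linarith [this, h4.le]
  clear_value m ρ₁ a' δ₀ t c
  refine ⟨ball x₀ a', ball_mem_nhds _ ha'0, ball y₀ t, ball_mem_nhds _ ht0, ?_⟩
  intro x hx y hy
  set S : Set X := {x' | y ∈ F x'} with hS
  have hxU : x ∈ U := hrU (mem_ball.2 (lt_of_lt_of_le (mem_ball.1 hx) ha'r))
  -- Step 1: y has a preimage point x₁ near x₀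
  have hyb : y ∈ ball y₀ (ρ₁ * L) :=
    mem_ball.2 (lt_of_lt_of_le (mem_ball.1 hy) htρ)
  have h1 := hop ρ₁ ⟨hρ₁0, hρ₁ε⟩ x₀ y₀ hxy hx₀U hy₀V hyb
  simp only [mem_iUnion, exists_prop] at h1
  obtain ⟨x₁, hx₁b, hx₁F⟩ := h1
  have hx₁S : x₁ ∈ S := hx₁F
  set D : ℝ≥0∞ := EMetric.infEdist y (F x) with hD
  by_cases hDc : ENNReal.ofReal (c * L) ≤ D
  · -- big distance case
    calc EMetric.infEdist x S ≤ edist x x₁ := EMetric.infEdist_le_edist_of_mem hx₁S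
      _ ≤ edist x x₀ + edist x₀ x₁ := edist_triangle _ _ _
      _ ≤ ENNReal.ofReal a' + ENNReal.ofReal ρ₁ := by
          gcongr
          · exact le_of_lt (edist_lt_ofReal.2 (mem_ball.1 hx))
          · rw [edist_comm]; exact le_of_lt (edist_lt_ofReal.2 (mem_ball.1 hx₁b))
      _ = ENNReal.ofReal c := by rw [← ENNReal.ofReal_add ha'0.le hρ₁0.le, ← hc]
      _ = ENNReal.ofReal L⁻¹ * ENNReal.ofReal (c * L) := by
          rw [← ENNReal.ofReal_mul (by positivity)]
          congr 1; field_simp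
      _ ≤ ENNReal.ofReal L⁻¹ * D := by gcongr
  · push_neg at hDc
    have hDfin : D ≠ ∞ := ne_top_of_lt (lt_of_lt_of_le hDc le_top)
    refine ENNReal.le_of_forall_pos_le_add fun η hη _ => ?_
    set δ : ℝ≥0∞ := min (ENNReal.ofReal δ₀) (ENNReal.ofReal ((η : ℝ) * L)) with hδ
    have hδ0 : 0 < δ := lt_min (ENNReal.ofReal_pos.2 hδ₀0)
      (ENNReal.ofReal_pos.2 (mul_pos (by exact_mod_cast hη) hL))
    have hδfin : δ ≠ ∞ := ne_top_of_le_ne_top ENNReal.ofReal_ne_top (min_le_left _ _)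
    have hDδfin : D + δ ≠ ∞ := by
      simp [ENNReal.add_ne_top, hDfin, hδfin]
    have hDδlt : D + δ < ENNReal.ofReal (c*L) + ENNReal.ofReal δ₀ := by
      exact ENNReal.add_lt_add_of_lt_of_le hδfin hDc (min_le_left _ _)
    have hEbound : (D + δ).toReal < c*L + δ₀ := by
      have := hDδlt
      rw [← ENNReal.ofReal_add (by positivity) hδ₀0.le] at this
      exact (ENNReal.lt_ofReal_iff_toReal_lt hDδfin).1 this
    obtain ⟨y', hy'F, hyy'⟩ := EMetric.infEdist_lt_iff.1
      (show EMetric.infEdist y (F x) < D + δ from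
        lt_of_lt_of_le (ENNReal.lt_add_right hDfin hδ0.ne') le_rfl)
    set e : ℝ := (D + δ).toReal with he
    have he0 : 0 < e := ENNReal.toReal_pos (lt_of_lt_of_le hδ0 le_add_self).ne' hDδfin
    have hyy'R : dist y y' < e := by
      rw [← ENNReal.ofReal_toReal hDδfin] at hyy'
      exact edist_lt_ofReal.1 hyy'
    -- y' ∈ V
    have hy'V : y' ∈ V := by
      apply hsV
      have h1 : dist y' y₀ ≤ dist y' y + dist y y₀ := dist_triangle _ _ _
      have h2 : dist y' y = dist y y' := dist_comm _ _
      have h3 : dist y y₀ < t := mem_ball.1 hy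
      have : dist y' y₀ < e + t := by rw [h2] at h1; linarith
      exact mem_ball.2 (by linarith [hEbound, hcL, htm, hms])
    set ρ : ℝ := e / L with hρ
    have hρ0 : 0 < ρ := by positivity
    have hρε : ρ < ε := by
      rw [hρ, div_lt_iff₀ hL]
      have : c*L + δ₀ < m := by linarith [hcL]
      linarith [hEbound, hmε]
    have hyb2 : y ∈ ball y' (ρ * L) := by
      rw [mem_ball]
      rw [hρ, div_mul_cancel₀ _ hL.ne']
      exact hyy'R
    have h2 := hop ρ ⟨hρ0, hρε⟩ x y' hy'F hxU hy'V hyb2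
    simp only [mem_iUnion, exists_prop] at h2
    obtain ⟨x₂, hx₂b, hx₂F⟩ := h2
    have hx₂S : x₂ ∈ S := hx₂F
    calc EMetric.infEdist x S ≤ edist x x₂ := EMetric.infEdist_le_edist_of_mem hx₂S
      _ ≤ ENNReal.ofReal ρ := by
          rw [edist_comm]; exact (edist_lt_ofReal.2 (mem_ball.1 hx₂b)).le
      _ = ENNReal.ofReal L⁻¹ * (D + δ) := by
          rw [hρ, div_eq_mul_inv, ENNReal.ofReal_mul he0.le, mul_comm,
            he, ENNReal.ofReal_toReal hDδfin]
      _ = ENNReal.ofReal L⁻¹ * D + ENNReal.ofReal L⁻¹ * δ := by rw [mul_add]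
      _ ≤ ENNReal.ofReal L⁻¹ * D + η := by
          gcongr
          calc ENNReal.ofReal L⁻¹ * δ
              ≤ ENNReal.ofReal L⁻¹ * ENNReal.ofReal ((η:ℝ) * L) := by
                gcongr; exact min_le_right _ _
            _ = ENNReal.ofReal (L⁻¹ * ((η:ℝ) * L)) := by
                rw [← ENNReal.ofReal_mul (by positivity)]
            _ = ENNReal.ofReal (η:ℝ) := by congr 1; field_simp
            _ = (η : ℝ≥0∞) := ENNReal.ofReal_coe_nnreal
end

section
/- Let X, Y be metric spaces, F : X ⇒ Y a set-valued map, and (x̄, ȳ) ∈ Graph F. Then F is metrically regular around (x̄, ȳ) with constant L > 0 if and only if F⁻¹ : Y ⇒ X has the Aubin property around (ȳ, x̄) with constant L, i.e., there exist neighborhoods V of ȳ, U of x̄ such that for all y, v ∈ V, e(F⁻¹(y) ∩ U, F⁻¹(v)) ≤ L d(y, v), where e(A,B) := sup_{a∈A} d(a,B) is the excess. -/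
open Metric Set Filter Topology ENNReal

lemma infEDist_le_exc {α : Type*} [PseudoEMetricSpace α] {A B : Set α} {a : α} (ha : a ∈ A) :
    infEDist a B ≤ exc A B :=
  le_iSup₂ (f := fun a _ => infEDist a B) a ha

lemma le_mul_infEDist {α : Type*} [PseudoEMetricSpace α] {c K : ℝ≥0∞} {y : α} {s : Set α}
    (hK₀ : K ≠ 0) (hK : K ≠ ∞) (h : ∀ v ∈ s, c ≤ K * edist y v) : c ≤ K * infEDist y s := by
  rw [← ENNReal.div_le_iff' hK₀ hK]
  exact le_infEDist.2 fun v hv => (ENNReal.div_le_iff' hK₀ hK).2 (h v hv)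

lemma ofReal_mul_dist {α : Type*} [PseudoMetricSpace α] {L : ℝ} (hL : 0 ≤ L) (x y : α) :
    ENNReal.ofReal (L * dist x y) = ENNReal.ofReal L * edist x y := by
  rw [ENNReal.ofReal_mul hL, edist_dist]

section Multifunction

variable {X Y : Type*} [PseudoMetricSpace X] [PseudoMetricSpace Y]

def invMap (F : X → Set Y) (y : Y) : Set X := {x | y ∈ F x}

def IsMetricRegularOn (F : X → Set Y) (U : Set X) (V : Set Y) (L : ℝ) : Prop :=
  ∀ x ∈ U, ∀ y ∈ V, infEDist x (invMap F y) ≤ ENNReal.ofReal L * infEDist y (F x)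

def HasAubinOn (G : Y → Set X) (V : Set Y) (U : Set X) (L : ℝ) : Prop :=
  ∀ y ∈ V, ∀ v ∈ V, exc (G y ∩ U) (G v) ≤ ENNReal.ofReal (L * dist y v)

variable {F : X → Set Y} {U : Set X} {V : Set Y} {L : ℝ}

lemma IsMetricRegularOn.hasAubinOn (hL : 0 ≤ L) (h : IsMetricRegularOn F U V L) :
    HasAubinOn (invMap F) V U L := fun y _ v hv =>
  iSup₂_le fun x ⟨hyx, hxU⟩ => calc
    infEDist x (invMap F v) ≤ ENNReal.ofReal L * infEDist v (F x) := h x hxU v hv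
    _ ≤ ENNReal.ofReal L * edist v y := by gcongr; exact infEDist_le_edist_of_mem hyx
    _ = ENNReal.ofReal (L * dist y v) := by rw [ofReal_mul_dist hL, edist_comm]

lemma HasAubinOn.infEDist_le (h : HasAubinOn (invMap F) V U L) {x : X} {y v : Y}
    (hxU : x ∈ U) (hyx : y ∈ F x) (hy : y ∈ V) (hv : v ∈ V) :
    infEDist x (invMap F v) ≤ ENNReal.ofReal (L * dist y v) :=
  (infEDist_le_exc (A := invMap F y ∩ U) ⟨hyx, hxU⟩).trans (h y hy v hv)

lemma HasAubinOn.mono {G : Y → Set X} {V' : Set Y} (h : HasAubinOn G V U L) (hV : V' ⊆ V) :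
    HasAubinOn G V' U L := fun y hy v hv => h y (hV hy) v (hV hv)

lemma HasAubinOn.isMetricRegularOn {x₀ : X} {y₀ : Y} {ρ : ℝ} (hL : 0 < L)
    (hxy₀ : y₀ ∈ F x₀) (hx₀ : x₀ ∈ U) (h : HasAubinOn (invMap F) (ball y₀ ρ) U L) :
    IsMetricRegularOn F (U ∩ ball x₀ (L * ρ / 3)) (ball y₀ (ρ / 3)) L := by
  rintro x ⟨hxU, hxx₀⟩ y hyy₀
  rw [mem_ball] at hxx₀ hyy₀
  have hρ : 0 < ρ := by linarith [dist_nonneg (x := y) (y := y₀)]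
  have hy : y ∈ ball y₀ ρ := mem_ball.2 (by linarith)
  refine le_mul_infEDist (ENNReal.ofReal_pos.2 hL).ne' ofReal_ne_top fun v hv => ?_
  rw [← ofReal_mul_dist hL.le]
  -- For `v ∈ F x` far from `y₀` the Aubin estimate is unavailable, but `L * dist y v` is then
  -- large enough to dominate the detour through `x₀`.
  by_cases hvρ : v ∈ ball y₀ ρ
  · rw [dist_comm]
    exact h.infEDist_le hxU hv hvρ hy
  · have hyv : 2 * ρ / 3 ≤ dist y v := by
      linarith [not_lt.1 (mem_ball.not.1 hvρ), dist_triangle_left v y₀ y]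
    calc infEDist x (invMap F y)
        ≤ edist x x₀ + infEDist x₀ (invMap F y) := infEDist_le_edist_add_infEDist
      _ ≤ ENNReal.ofReal (dist x x₀) + ENNReal.ofReal (L * dist y₀ y) := by
          rw [edist_dist]
          gcongr
          exact h.infEDist_le hx₀ hxy₀ (mem_ball_self hρ) hy
      _ ≤ ENNReal.ofReal (L * dist y v) := by
          rw [← ENNReal.ofReal_add dist_nonneg (by positivity), dist_comm y₀]
          gcongr
          nlinarith

end Multifunction

theorem stmt1 {X Y : Type*} [MetricSpace X] [MetricSpace Y]
    (F : X → Set Y) (x₀ : X) (y₀ : Y) (hxy : y₀ ∈ F x₀) (L : ℝ) (hL : 0 < L) :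
    (∃ U ∈ 𝓝 x₀, ∃ V ∈ 𝓝 y₀, ∀ x ∈ U, ∀ y ∈ V,
      EMetric.infEdist x {x' | y ∈ F x'} ≤
        ENNReal.ofReal L * EMetric.infEdist y (F x)) ↔
    (∃ V ∈ 𝓝 y₀, ∃ U ∈ 𝓝 x₀, ∀ y ∈ V, ∀ v ∈ V,
      exc ({x' | y ∈ F x'} ∩ U) {x' | v ∈ F x'} ≤ ENNReal.ofReal (L * dist y v)) := by
  constructor
  · rintro ⟨U, hU, V, hV, hreg : IsMetricRegularOn F U V L⟩
    exact ⟨V, hV, U, hU, hreg.hasAubinOn hL.le⟩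
  · rintro ⟨V, hV, U, hU, haubin : HasAubinOn (invMap F) V U L⟩
    obtain ⟨ρ, hρ, hρV⟩ := Metric.mem_nhds_iff.1 hV
    refine ⟨U ∩ ball x₀ (L * ρ / 3), inter_mem hU (ball_mem_nhds _ (by positivity)),
      ball y₀ (ρ / 3), ball_mem_nhds _ (by positivity), ?_⟩
    exact (haubin.mono hρV).isMetricRegularOn hL hxy (mem_of_mem_nhds hU)
end

section
/- Let Y, Z, W be metric spaces, G : Y × Z ⇒ W a set-valued map, and (ȳ, z̄, w̄) with w̄ ∈ G(ȳ, z̄). Define Γ : Z × W ⇒ Y by Γ(z, w) := {y ∈ Y : w ∈ G(y, z)}. Assume: (i) G has the Aubin property with respect to z uniformly in y around ((ȳ, z̄), w̄) with constant D > 0; (ii) G is open at linear rate with respect to y uniformly in z around ((ȳ, z̄), w̄) with constant C > 0. Then there exists γ > 0 such that for all (z, w), (z', w') in the closed balls D(z̄, γ) × D(w̄, γ), one has e(Γ(z, w) ∩ D(ȳ, γ), Γ(z', w')) ≤ (1/C)(D·d(z, z') + d(w, w')). -/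
open Metric Set Filter Topology ENNReal

theorem stmt2 {Y Z W : Type*} [MetricSpace Y] [MetricSpace Z] [MetricSpace W]
    (G : Y → Z → Set W) (y₀ : Y) (z₀ : Z) (w₀ : W) (hw : w₀ ∈ G y₀ z₀)
    (C D : ℝ) (hC : 0 < C) (hD : 0 < D)
    (hAub : ∃ U ∈ 𝓝 y₀, ∃ V ∈ 𝓝 z₀, ∃ W₀ ∈ 𝓝 w₀, ∀ y ∈ U, ∀ z ∈ V, ∀ z' ∈ V,
      exc (G y z ∩ W₀) (G y z') ≤ ENNReal.ofReal (D * dist z z'))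
    (hOpen : ∃ ε > (0:ℝ), ∃ U ∈ 𝓝 y₀, ∃ V ∈ 𝓝 z₀, ∃ W₀ ∈ 𝓝 w₀,
      ∀ ρ ∈ Set.Ioo (0:ℝ) ε, ∀ z ∈ V, ∀ y ∈ U, ∀ w ∈ G y z ∩ W₀,
        Metric.ball w (C * ρ) ⊆ ⋃ y' ∈ Metric.ball y ρ, G y' z) :
    ∃ γ > (0:ℝ), ∀ z ∈ Metric.closedBall z₀ γ, ∀ w ∈ Metric.closedBall w₀ γ,
      ∀ z' ∈ Metric.closedBall z₀ γ, ∀ w' ∈ Metric.closedBall w₀ γ,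
        exc ({y | w ∈ G y z} ∩ Metric.closedBall y₀ γ) {y | w' ∈ G y z'} ≤
          ENNReal.ofReal ((1 / C) * (D * dist z z' + dist w w')) := by
  obtain ⟨U1, hU1, V1, hV1, W1, hW1, haub⟩ := hAub
  obtain ⟨ε, hε, U2, hU2, V2, hV2, W2, hW2, hopen⟩ := hOpen
  obtain ⟨rU, hrU, hbU⟩ := Metric.mem_nhds_iff.1 (inter_mem hU1 hU2)
  obtain ⟨rV, hrV, hbV⟩ := Metric.mem_nhds_iff.1 (inter_mem hV1 hV2)
  obtain ⟨rW, hrW, hbW⟩ := Metric.mem_nhds_iff.1 (inter_mem hW1 hW2)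
  set r : ℝ := min rU (min rV rW) with hr_def
  have hr : 0 < r := lt_min hrU (lt_min hrV hrW)
  set m : ℝ := min r (C * ε) with hm_def
  have hm : 0 < m := lt_min hr (mul_pos hC hε)
  set γ : ℝ := m / (4 * D + 9) with hγ_def
  have hden : (0:ℝ) < 4 * D + 9 := by nlinarith
  have hγ : 0 < γ := div_pos hm hden
  have hγm : γ ≤ m / 9 := by
    rw [hγ_def]
    apply div_le_div_of_nonneg_left hm.le (by norm_num) (by nlinarith)
  have hγr : γ < r := lt_of_le_of_lt hγm (by
    have : m ≤ r := min_le_left _ _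
    nlinarith)
  have hrV' : γ < rV := lt_of_lt_of_le hγr ((min_le_right _ _).trans (min_le_left _ _))
  have hrW' : γ < rW := lt_of_lt_of_le hγr ((min_le_right _ _).trans (min_le_right _ _))
  have hrU' : γ < rU := lt_of_lt_of_le hγr (min_le_left _ _)
  have hrWle : r ≤ rW := (min_le_right _ _).trans (min_le_right _ _)
  refine ⟨γ, hγ, fun z hz w hwb z' hz' w' hw'b => ?_⟩
  have hzV : z ∈ V1 ∩ V2 := hbV (lt_of_le_of_lt (mem_closedBall.1 hz) hrV')
  have hz'V : z' ∈ V1 ∩ V2 := hbV (lt_of_le_of_lt (mem_closedBall.1 hz') hrV')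
  have hwW : w ∈ W1 ∩ W2 := hbW (lt_of_le_of_lt (mem_closedBall.1 hwb) hrW')
  set T : ℝ := D * dist z z' + dist w w' with hT_def
  have hT0 : 0 ≤ T := by positivity
  have hTbound : T ≤ (2 * D + 2) * γ := by
    have h1 : dist z z' ≤ 2 * γ := by
      have := dist_triangle z z₀ z'
      have h2 := mem_closedBall.1 hz
      have h3 := mem_closedBall.1 hz'
      rw [dist_comm z₀ z'] at this
      linarith
    have h4 : dist w w' ≤ 2 * γ := by
      have := dist_triangle w w₀ w'
      have h5 := mem_closedBall.1 hwb
      have h6 := mem_closedBall.1 hw'b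
      rw [dist_comm w₀ w'] at this
      linarith
    nlinarith
  have hTm : T < m / 2 := by
    have hγeq : γ * (4 * D + 9) = m := div_mul_cancel₀ m hden.ne'
    nlinarith [hγ, hTbound]
  rw [exc]
  refine iSup₂_le fun y hy => ?_
  obtain ⟨hyG, hyb⟩ := hy
  have hyU : y ∈ U1 ∩ U2 := hbU (lt_of_le_of_lt (mem_closedBall.1 hyb) hrU')
  have key : ∀ δ : ℝ, 0 < δ →
      EMetric.infEdist y {y | w' ∈ G y z'} ≤ ENNReal.ofReal (T / C + δ) := by
    intro δ hδ
    set ρ : ℝ := min (T / C + δ) (min (ε / 2) ((r - γ) / C)) with hρ_def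
    have hrγ : T < r - γ := by
      have h1 : m ≤ r := min_le_left _ _
      linarith [hγm, hTm]
    have hTCρ : T / C < ρ := by
      refine lt_min (by linarith) (lt_min ?_ ?_)
      · rw [div_lt_iff₀ hC]
        have h3 : m ≤ C * ε := min_le_right _ _
        nlinarith
      · exact (div_lt_div_iff_of_pos_right hC).2 hrγ
    have hρpos : 0 < ρ := lt_of_le_of_lt (div_nonneg hT0 hC.le) hTCρ
    have hρε : ρ < ε := lt_of_le_of_lt (le_trans (min_le_right _ _) (min_le_left _ _))
      (by linarith)
    have hCργ : C * ρ ≤ r - γ := by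
      have h5 : ρ ≤ (r - γ) / C := le_trans (min_le_right _ _) (min_le_right _ _)
      rw [le_div_iff₀ hC] at h5
      linarith [h5]
    have hTCρ' : T < C * ρ := by
      rw [div_lt_iff₀ hC] at hTCρ; linarith
    -- Aubin: infEdist w (G y z') ≤ ofReal (D * dist z z')
    have h1 : EMetric.infEdist w (G y z') ≤ ENNReal.ofReal (D * dist z z') := by
      refine le_trans ?_ (haub y hyU.1 z hzV.1 z' hz'V.1)
      rw [exc]
      exact le_iSup₂ (f := fun a (_ : a ∈ G y z ∩ W1) => EMetric.infEdist a (G y z'))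
        w ⟨hyG, hwW.1⟩
    have h2 : EMetric.infEdist w' (G y z') ≤ ENNReal.ofReal T := by
      calc EMetric.infEdist w' (G y z')
          ≤ EMetric.infEdist w (G y z') + edist w' w :=
            EMetric.infEdist_le_infEdist_add_edist
        _ ≤ ENNReal.ofReal (D * dist z z') + ENNReal.ofReal (dist w w') := by
            gcongr
            rw [edist_dist, dist_comm]
        _ = ENNReal.ofReal T := by
            rw [← ENNReal.ofReal_add (by positivity) dist_nonneg]
    have h3 : EMetric.infEdist w' (G y z') < ENNReal.ofReal (C * ρ) :=
      lt_of_le_of_lt h2 ((ENNReal.ofReal_lt_ofReal_iff (by positivity)).2 hTCρ')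
    obtain ⟨v, hvG, hvd⟩ := EMetric.infEdist_lt_iff.1 h3
    have hvd' : dist w' v < C * ρ := by rwa [edist_lt_ofReal] at hvd
    have hvW2 : v ∈ W2 := by
      refine (hbW ?_).2
      have h6 := dist_triangle v w' w₀
      have h7 := mem_closedBall.1 hw'b
      rw [mem_ball]
      rw [dist_comm w' v] at hvd'
      calc dist v w₀ ≤ dist v w' + dist w' w₀ := h6
        _ < C * ρ + γ := by linarith
        _ ≤ r := by linarith
        _ ≤ rW := hrWle
    have happ := hopen ρ ⟨hρpos, hρε⟩ z' hz'V.2 y hyU.2 v ⟨hvG, hvW2⟩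
    have hw'mem : w' ∈ Metric.ball v (C * ρ) := by rwa [mem_ball]
    obtain ⟨y'', hy''⟩ := mem_iUnion.1 (happ hw'mem)
    obtain ⟨hy''b, hw'G⟩ := mem_iUnion.1 hy''
    calc EMetric.infEdist y {y | w' ∈ G y z'}
        ≤ edist y y'' := EMetric.infEdist_le_edist_of_mem hw'G
      _ ≤ ENNReal.ofReal ρ := by
          rw [edist_dist]
          exact ENNReal.ofReal_le_ofReal (by rw [dist_comm]; exact (mem_ball.1 hy''b).le)
      _ ≤ ENNReal.ofReal (T / C + δ) := ENNReal.ofReal_le_ofReal (min_le_left _ _)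
  have hfin : EMetric.infEdist y {y | w' ∈ G y z'} ≤ ENNReal.ofReal (T / C) := by
    refine ENNReal.le_of_forall_pos_le_add fun δ hδ _ => ?_
    calc EMetric.infEdist y {y | w' ∈ G y z'}
        ≤ ENNReal.ofReal (T / C + δ) := key δ (by exact_mod_cast hδ)
      _ = ENNReal.ofReal (T / C) + ENNReal.ofReal δ :=
          ENNReal.ofReal_add (div_nonneg hT0 hC.le) δ.2
      _ = ENNReal.ofReal (T / C) + δ := by rw [ENNReal.ofReal_coe_nnreal]
  calc EMetric.infEdist y {y | w' ∈ G y z'} ≤ ENNReal.ofReal (T / C) := hfin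
    _ = ENNReal.ofReal ((1 / C) * T) := by rw [one_div, div_eq_inv_mul]
end

section
/- On the real line ℝ equipped with the metric d(x, y) = |x³ − y³|, the subtraction map G(y, z) = y − z is NOT open at any linear rate around the point ((1, 1), 0). That is, for every C > 0 there is no ε > 0 and neighborhoods U of 1, V of 1, W of 0 such that for all ρ ∈ (0, ε), z ∈ V, and (y, w) in the graph of G(·, z) with y ∈ U, w ∈ W, one has B(w, Cρ) ⊆ G(B(y, ρ), z). -/
open Set Filter Topology

noncomputable def dcube (x y : ℝ) : ℝ := |x ^ 3 - y ^ 3|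

theorem stmt6 :
    ∀ C > (0:ℝ), ¬ ∃ ε > (0:ℝ), ∃ U ∈ 𝓝 (1:ℝ), ∃ V ∈ 𝓝 (1:ℝ), ∃ W ∈ 𝓝 (0:ℝ),
      ∀ ρ ∈ Set.Ioo (0:ℝ) ε, ∀ z ∈ V, ∀ y ∈ U, y - z ∈ W →
        {w' : ℝ | dcube (y - z) w' < C * ρ} ⊆
          (fun u => u - z) '' {u : ℝ | dcube y u < ρ} := by
  intro C hC
  rintro ⟨ε, hε, U, hU, V, hV, W, hW, h⟩
  set ρ : ℝ := min ε (Real.sqrt C) / 2 with hρdef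
  have hsq : 0 < Real.sqrt C := Real.sqrt_pos.mpr hC
  have hρ0 : 0 < ρ := by positivity
  have hρε : ρ < ε := by
    have : ρ ≤ ε / 2 := by
      apply div_le_div_of_nonneg_right (min_le_left _ _)
      norm_num
    linarith
  have hρsq : ρ ≤ Real.sqrt C / 2 := by
    apply div_le_div_of_nonneg_right (min_le_right _ _)
    norm_num
  have hρ2 : ρ ^ 2 ≤ C / 4 := by
    have h1 : ρ ^ 2 ≤ (Real.sqrt C / 2) ^ 2 := by
      apply pow_le_pow_left₀ hρ0.le hρsq
    have h2 : (Real.sqrt C / 2) ^ 2 = C / 4 := by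
      rw [div_pow, Real.sq_sqrt hC.le]; norm_num
    linarith
  have key := h ρ ⟨hρ0, hρε⟩ 1 (mem_of_mem_nhds hV) 1 (mem_of_mem_nhds hU)
    (by simpa using mem_of_mem_nhds hW)
  -- w' = ρ/2
  have hw'mem : (ρ / 2) ∈ {w' : ℝ | dcube (1 - 1 : ℝ) w' < C * ρ} := by
    simp only [Set.mem_setOf_eq, dcube, sub_self]
    have : |(0:ℝ) ^ 3 - (ρ / 2) ^ 3| = (ρ / 2) ^ 3 := by
      rw [abs_sub_comm, zero_pow (by norm_num), sub_zero]
      exact abs_of_nonneg (by positivity)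
    rw [this]
    have : (ρ / 2) ^ 3 = ρ ^ 2 * ρ / 8 := by ring
    rw [this]
    nlinarith [hρ2, hρ0, hC]
  obtain ⟨u, hu, huw⟩ := key hw'mem
  simp only [Set.mem_setOf_eq, dcube] at hu
  have hu' : u = ρ / 2 + 1 := by linarith [huw]
  rw [hu'] at hu
  have habs : |(1:ℝ) ^ 3 - (ρ / 2 + 1) ^ 3| = (ρ / 2 + 1) ^ 3 - 1 := by
    rw [abs_sub_comm, one_pow]
    exact abs_of_nonneg (by nlinarith [hρ0])
  rw [habs] at hu
  nlinarith [hρ0]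
end

section
/- Let X be a metric space and Y a vector space with a complete shift-invariant metric, F₁, F₂ : X ⇒ Y set-valued maps, and x̄ ∈ X, ȳ₁ ∈ F₁(x̄), ȳ₂ ∈ F₂(x̄). Assume: (i) Graph F₁ and Graph F₂ are locally complete around (x̄, ȳ₁) and (x̄, ȳ₂); (ii) F₁ is metrically regular around (x̄, ȳ₁) with constant l > 0; (iii) F₂ has the Aubin property around (x̄, ȳ₂) with constant m > 0; (iv) lm < 1. Then there exists ε > 0 such that for every ρ ∈ (0, ε), B(ȳ₁ − ȳ₂, (l⁻¹ − m)ρ) ⊆ (F₁ − F₂)(B(x̄, ρ)), where (F₁ − F₂)(x) := {y₁ − y₂ : y₁ ∈ F₁(x), y₂ ∈ F₂(x)}. -/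
open Metric Set Filter Topology ENNReal

/-!
To reach a target `y` near `y₁ - y₂`, solve `y + z ∈ F₁ x`, `z ∈ F₂ x` by alternating the two
hypotheses from `(x₀, y₂)`: metric regularity moves `x` to some `x'` with `y + z ∈ F₁ x'` at
distance about `l` times the residual `d(y + z, F₁ x)`, and the Aubin property then moves `z` to
some `z' ∈ F₂ x'` at distance about `m d(x, x')`. As `y + z ∈ F₁ x'`, shift invariance bounds the
new residual by `d(z, z')`, so residuals and steps decay geometrically with ratio `l m < 1`; the
iterates stay where the hypotheses hold, and local completeness of the graphs gives the limit.
Bounding residuals strictly (`infEDist < ofReal s`) makes every step attainable without slack.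
-/

theorem exists_seq_of_forall_exists {α : Type*} {P : ℕ → α → Prop} {R : ℕ → α → α → Prop}
    {a : α} (ha : P 0 a) (h : ∀ n a, P n a → ∃ b, P (n + 1) b ∧ R n a b) :
    ∃ f : ℕ → α, ∀ n, P n (f n) ∧ R n (f n) (f (n + 1)) := by
  have : Nonempty α := ⟨a⟩
  choose! g hg using h
  let f : ℕ → α := fun n => Nat.rec a (fun k b => g k b) n
  have hf : ∀ n, P n (f n) := fun n => by
    induction n with
    | zero => exact ha
    | succ n ih => exact (hg n _ ih).1
  exact ⟨f, fun n => ⟨hf n, (hg n _ (hf n)).2⟩⟩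

namespace SetValued

variable {X Y : Type*}

def graph (F : X → Set Y) : Set (X × Y) := {p | p.2 ∈ F p.1}

def MetricRegularOn [PseudoEMetricSpace X] [PseudoEMetricSpace Y] (F : X → Set Y) (l : ℝ)
    (U : Set X) (V : Set Y) : Prop :=
  ∀ x ∈ U, ∀ y ∈ V, infEDist x {x' | y ∈ F x'} ≤ ENNReal.ofReal l * infEDist y (F x)

def AubinOn [PseudoMetricSpace X] [PseudoEMetricSpace Y] (F : X → Set Y) (m : ℝ)
    (U : Set X) (V : Set Y) : Prop :=
  ∀ x ∈ U, ∀ u ∈ U, exc (F x ∩ V) (F u) ≤ ENNReal.ofReal (m * dist x u)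

section Steps

variable [PseudoMetricSpace X] [PseudoMetricSpace Y] {F : X → Set Y} {U U' : Set X}
  {V V' : Set Y} {x u : X} {y : Y} {l m s : ℝ}

theorem MetricRegularOn.mono (h : MetricRegularOn F l U V) (hU : U' ⊆ U) (hV : V' ⊆ V) :
    MetricRegularOn F l U' V' :=
  fun x hx y hy => h x (hU hx) y (hV hy)

theorem AubinOn.mono (h : AubinOn F m U V) (hU : U' ⊆ U) (hV : V' ⊆ V) :
    AubinOn F m U' V' :=
  fun x hx u hu => (biSup_mono fun _ hz => ⟨hz.1, hV hz.2⟩).trans (h x (hU hx) u (hU hu))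

theorem MetricRegularOn.exists_dist_lt (h : MetricRegularOn F l U V) (hl : 0 < l) (hx : x ∈ U)
    (hy : y ∈ V) (hs : infEDist y (F x) < ENNReal.ofReal s) :
    ∃ x', y ∈ F x' ∧ dist x x' < l * s := by
  have : infEDist x {x' | y ∈ F x'} < ENNReal.ofReal (l * s) :=
    calc infEDist x {x' | y ∈ F x'} ≤ ENNReal.ofReal l * infEDist y (F x) := h x hx y hy
      _ < ENNReal.ofReal l * ENNReal.ofReal s :=
        ENNReal.mul_lt_mul_right (ofReal_pos.2 hl).ne' ofReal_ne_top hs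
      _ = ENNReal.ofReal (l * s) := (ofReal_mul hl.le).symm
  obtain ⟨x', hx', hd⟩ := infEDist_lt_iff.1 this
  exact ⟨x', hx', edist_lt_ofReal.1 hd⟩

theorem AubinOn.exists_dist_lt (h : AubinOn F m U V) (hm : 0 < m) (hx : x ∈ U) (hu : u ∈ U)
    (hy : y ∈ F x ∩ V) (hd : dist x u < s) :
    ∃ y' ∈ F u, dist y y' < m * s := by
  have : infEDist y (F u) < ENNReal.ofReal (m * s) :=
    calc infEDist y (F u) ≤ exc (F x ∩ V) (F u) :=
          le_iSup₂ (f := fun a _ => infEDist a (F u)) y hy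
      _ ≤ ENNReal.ofReal (m * dist x u) := h x hx u hu
      _ < ENNReal.ofReal (m * s) :=
        (ofReal_lt_ofReal_iff (by nlinarith [dist_nonneg (x := x) (y := u)])).2
          (mul_lt_mul_of_pos_left hd hm)
  obtain ⟨y', hy', hd⟩ := infEDist_lt_iff.1 this
  exact ⟨y', hy', edist_lt_ofReal.1 hd⟩

end Steps

section Iteration

/-- `r` is the part of the budget `L` for the total displacement of `x` not yet spent; bounding
the residual by `(1 - l m) r / l` makes all later steps of `x` sum to at most `r`. -/
def IterationInvariant [PseudoMetricSpace X] [Add Y] [PseudoMetricSpace Y] (F₁ F₂ : X → Set Y)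
    (l m L : ℝ) (x₀ : X) (y y₂ : Y) (r : ℝ) (p : X × Y) : Prop :=
  p.2 ∈ F₂ p.1 ∧ dist x₀ p.1 + r ≤ L ∧ dist y₂ p.2 + m * r ≤ m * L ∧
    infEDist (y + p.2) (F₁ p.1) < ENNReal.ofReal ((1 - l * m) * r / l)

variable [MetricSpace X] [Add Y] [MetricSpace Y] {F₁ F₂ : X → Set Y} {l m L r : ℝ} {x₀ : X}
  {y y₂ : Y}

theorem IterationInvariant.pos {p : X × Y} (hp : IterationInvariant F₁ F₂ l m L x₀ y y₂ r p)
    (hl : 0 < l) (hlm : l * m < 1) : 0 < r := by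
  have := ofReal_pos.1 (bot_le.trans_lt hp.2.2.2)
  rw [div_pos_iff_of_pos_right hl] at this
  exact pos_of_mul_pos_right this (by linarith)

theorem IterationInvariant.mem_closedBall {p : X × Y}
    (hp : IterationInvariant F₁ F₂ l m L x₀ y y₂ r p) (hm : 0 ≤ m) (hr : 0 ≤ r) :
    p.1 ∈ closedBall x₀ L ∧ p.2 ∈ closedBall y₂ (m * L) := by
  rw [mem_closedBall', mem_closedBall']
  exact ⟨by linarith [hp.2.1], by nlinarith [hp.2.2.1]⟩

theorem IterationInvariant.exists_next [IsIsometricVAdd Y Y] (hl : 0 < l) (hm : 0 < m)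
    (hlm : l * m < 1)
    (hreg : MetricRegularOn F₁ l (ball x₀ L) (ball (y + y₂) (m * L)))
    (hAub : AubinOn F₂ m (ball x₀ L) (ball y₂ (m * L))) {p : X × Y}
    (hp : IterationInvariant F₁ F₂ l m L x₀ y y₂ r p) :
    ∃ p', IterationInvariant F₁ F₂ l m L x₀ y y₂ (l * m * r) p' ∧ y + p.2 ∈ F₁ p'.1 ∧
      dist p.1 p'.1 ≤ (1 - l * m) * r ∧ dist p.2 p'.2 ≤ m * ((1 - l * m) * r) := by
  have hr := hp.pos hl hlm
  obtain ⟨x, z⟩ := p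
  obtain ⟨hz, hx, hzd, hres⟩ := hp
  have hxU : x ∈ ball x₀ L := by rw [mem_ball']; linarith
  have hzV : z ∈ ball y₂ (m * L) := by rw [mem_ball']; nlinarith
  have hwV : y + z ∈ ball (y + y₂) (m * L) := by rwa [mem_ball', dist_add_left, ← mem_ball']
  obtain ⟨x', hwF, hxx'⟩ := hreg.exists_dist_lt hl hxU hwV hres
  rw [mul_div_cancel₀ _ hl.ne'] at hxx'
  have hx' : dist x₀ x' + l * m * r ≤ L := by linarith [dist_triangle x₀ x x']
  have hx'U : x' ∈ ball x₀ L := by rw [mem_ball']; nlinarith [mul_pos (mul_pos hl hm) hr]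
  obtain ⟨z', hz'F, hzz'⟩ := hAub.exists_dist_lt hm hxU hx'U ⟨hz, hzV⟩ hxx'
  refine ⟨(x', z'), ⟨hz'F, hx', by linarith [dist_triangle y₂ z z'], ?_⟩, hwF, hxx'.le, hzz'.le⟩
  calc infEDist (y + z') (F₁ x') ≤ edist (y + z') (y + z) := infEDist_le_edist_of_mem hwF
    _ < ENNReal.ofReal (m * ((1 - l * m) * r)) := by
      rwa [edist_lt_ofReal, dist_add_left, dist_comm]
    _ = ENNReal.ofReal ((1 - l * m) * (l * m * r) / l) := by
      congr 1
      field_simp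

theorem exists_add_mem_of_metricRegularOn_of_aubinOn [IsIsometricVAdd Y Y] (hl : 0 < l)
    (hm : 0 < m) (hlm : l * m < 1)
    (hreg : MetricRegularOn F₁ l (ball x₀ L) (ball (y + y₂) (m * L)))
    (hAub : AubinOn F₂ m (ball x₀ L) (ball y₂ (m * L))) {K₁ K₂ : Set (X × Y)}
    (hc₁ : IsComplete (graph F₁ ∩ K₁)) (hK₁ : closedBall x₀ L ×ˢ closedBall (y + y₂) (m * L) ⊆ K₁)
    (hc₂ : IsComplete (graph F₂ ∩ K₂)) (hK₂ : closedBall x₀ L ×ˢ closedBall y₂ (m * L) ⊆ K₂)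
    (hy₂ : y₂ ∈ F₂ x₀) (hy : infEDist (y + y₂) (F₁ x₀) < ENNReal.ofReal ((1 - l * m) * L / l)) :
    ∃ x ∈ closedBall x₀ L, ∃ z ∈ F₂ x, y + z ∈ F₁ x := by
  obtain ⟨p, hp⟩ := exists_seq_of_forall_exists
    (P := fun n => IterationInvariant F₁ F₂ l m L x₀ y y₂ ((l * m) ^ n * L))
    (R := fun n p p' => y + p.2 ∈ F₁ p'.1 ∧ dist p.1 p'.1 ≤ (1 - l * m) * ((l * m) ^ n * L) ∧
      dist p.2 p'.2 ≤ m * ((1 - l * m) * ((l * m) ^ n * L)))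
    (a := (x₀, y₂)) ⟨hy₂, by simp, by simp, by simpa using hy⟩
    fun n p hp => by simpa only [pow_succ', mul_assoc] using hp.exists_next hl hm hlm hreg hAub
  have hloc : ∀ n, (p n).1 ∈ closedBall x₀ L ∧ (p n).2 ∈ closedBall y₂ (m * L) :=
    fun n => (hp n).1.mem_closedBall hm.le ((hp n).1.pos hl hlm).le
  have hxC : CauchySeq fun n => (p n).1 :=
    cauchySeq_of_le_geometric (l * m) ((1 - l * m) * L) hlm fun n => (hp n).2.2.1.trans_eq (by ring)
  have hzC : CauchySeq fun n => (p n).2 :=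
    cauchySeq_of_le_geometric (l * m) (m * ((1 - l * m) * L)) hlm
      fun n => (hp n).2.2.2.trans_eq (by ring)
  obtain ⟨⟨a, w⟩, ⟨haw, -⟩, hlim₁⟩ := cauchySeq_tendsto_of_isComplete hc₁
    (u := fun n => ((p (n + 1)).1, y + (p n).2))
    (fun n => ⟨(hp n).2.1, hK₁ ⟨(hloc (n + 1)).1, by
      rw [mem_closedBall, dist_add_left]; exact (hloc n).2⟩⟩)
    ((hxC.comp_tendsto (tendsto_add_atTop_nat 1)).prodMk
      ((isometry_vadd Y y).uniformContinuous.comp_cauchySeq hzC))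
  obtain ⟨⟨a', z⟩, ⟨hz, -⟩, hlim₂⟩ :=
    cauchySeq_tendsto_of_isComplete hc₂ (fun n => ⟨(hp n).1.1, hK₂ (hloc n)⟩) (hxC.prodMk hzC)
  have ha : a = a' :=
    tendsto_nhds_unique hlim₁.fst_nhds (hlim₂.fst_nhds.comp (tendsto_add_atTop_nat 1))
  have hw : w = y + z :=
    tendsto_nhds_unique hlim₁.snd_nhds (((continuous_const_vadd y).tendsto z).comp hlim₂.snd_nhds)
  refine ⟨a', isClosed_closedBall.mem_of_tendsto hlim₂.fst_nhds
    (Eventually.of_forall fun n => (hloc n).1), z, hz, ?_⟩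
  rw [← ha, ← hw]
  exact haw

end Iteration

theorem exists_add_mem_of_dist_lt {X Y : Type*} [MetricSpace X] [AddCommGroup Y] [MetricSpace Y]
    [IsIsometricVAdd Y Y] {F₁ F₂ : X → Set Y} {x₀ : X} {y y₁ y₂ : Y} {l m δ ρ : ℝ}
    {K₁ K₂ : Set (X × Y)} (hl : 0 < l) (hm : 0 < m) (hlm : l * m < 1)
    (hreg : MetricRegularOn F₁ l (ball x₀ δ) (ball y₁ δ))
    (hAub : AubinOn F₂ m (ball x₀ δ) (ball y₂ δ))
    (hc₁ : IsComplete (graph F₁ ∩ K₁)) (hK₁ : closedBall (x₀, y₁) δ ⊆ K₁)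
    (hc₂ : IsComplete (graph F₂ ∩ K₂)) (hK₂ : closedBall (x₀, y₂) δ ⊆ K₂)
    (h₁ : y₁ ∈ F₁ x₀) (h₂ : y₂ ∈ F₂ x₀) (hρδ : ρ ≤ δ) (hρlδ : ρ ≤ l * δ)
    (hy : dist y (y₁ - y₂) < (l⁻¹ - m) * ρ) :
    ∃ x ∈ ball x₀ ρ, ∃ z ∈ F₂ x, y + z ∈ F₁ x := by
  set d := dist y (y₁ - y₂) with hd_def
  have hd : dist (y + y₂) y₁ = d := by rw [hd_def, ← dist_add_right y (y₁ - y₂) y₂, sub_add_cancel]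
  obtain ⟨L, hdL, hLρ⟩ : ∃ L, l * d < (1 - l * m) * L ∧ L < ρ := by
    have : l * d < (1 - l * m) * ρ := by
      calc l * d < l * ((l⁻¹ - m) * ρ) := mul_lt_mul_of_pos_left hy hl
        _ = (1 - l * m) * ρ := by field_simp
    obtain ⟨L, h, hL⟩ := exists_between ((div_lt_iff₀' (by linarith)).2 this)
    exact ⟨L, (div_lt_iff₀' (by linarith)).1 h, hL⟩
  have hLδ : L ≤ δ := by linarith
  have hmLd : m * L + d ≤ δ := by nlinarith
  have hmLδ : m * L ≤ δ := by linarith [dist_nonneg (x := y) (y := y₁ - y₂)]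
  obtain ⟨x, hx, z, hz, hyz⟩ := exists_add_mem_of_metricRegularOn_of_aubinOn hl hm hlm
    (hreg.mono (ball_subset_ball hLδ) (ball_subset_ball' (by rwa [hd])))
    (hAub.mono (ball_subset_ball hLδ) (ball_subset_ball hmLδ)) hc₁
    (fun p hp => hK₁ (by
      rw [← closedBall_prod_same]
      exact prod_mono (closedBall_subset_closedBall hLδ)
        (closedBall_subset_closedBall' (by rwa [hd])) hp))
    hc₂
    (fun p hp => hK₂ (by
      rw [← closedBall_prod_same]
      exact prod_mono (closedBall_subset_closedBall hLδ) (closedBall_subset_closedBall hmLδ) hp))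
    h₂ ((infEDist_le_edist_of_mem h₁).trans_lt (by
      rw [edist_lt_ofReal, hd, lt_div_iff₀ hl]; linarith))
  exact ⟨x, closedBall_subset_ball hLρ hx, z, hz, hyz⟩

end SetValued

theorem stmt8 {X Y : Type*} [MetricSpace X] [AddCommGroup Y] [MetricSpace Y]
    (hshift : ∀ a b c : Y, dist (a + c) (b + c) = dist a b)
    (F₁ F₂ : X → Set Y) (x₀ : X) (y₁ y₂ : Y)
    (h1 : y₁ ∈ F₁ x₀) (h2 : y₂ ∈ F₂ x₀)
    (l m : ℝ) (hl : 0 < l) (hm : 0 < m) (hlm : l * m < 1)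
    (hcomp1 : ∃ r > (0:ℝ),
      IsComplete ({p : X × Y | p.2 ∈ F₁ p.1} ∩ Metric.closedBall (x₀, y₁) r))
    (hcomp2 : ∃ r > (0:ℝ),
      IsComplete ({p : X × Y | p.2 ∈ F₂ p.1} ∩ Metric.closedBall (x₀, y₂) r))
    (hreg : ∃ U ∈ 𝓝 x₀, ∃ V ∈ 𝓝 y₁, ∀ x ∈ U, ∀ y ∈ V,
      EMetric.infEdist x {x' | y ∈ F₁ x'} ≤
        ENNReal.ofReal l * EMetric.infEdist y (F₁ x))
    (hAub : ∃ U ∈ 𝓝 x₀, ∃ V ∈ 𝓝 y₂, ∀ x ∈ U, ∀ u ∈ U,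
      exc (F₂ x ∩ V) (F₂ u) ≤ ENNReal.ofReal (m * dist x u)) :
    ∃ ε > (0:ℝ), ∀ ρ ∈ Set.Ioo (0:ℝ) ε,
      Metric.ball (y₁ - y₂) ((l⁻¹ - m) * ρ) ⊆
        ⋃ x ∈ Metric.ball x₀ ρ, (fun p : Y × Y => p.1 - p.2) '' (F₁ x ×ˢ F₂ x) := by
  have : IsIsometricVAdd Y Y :=
    ⟨fun c => Isometry.of_dist_eq fun a b => by
      simpa only [vadd_eq_add, add_comm c] using hshift a b c⟩
  obtain ⟨r₁, hr₁, hc₁⟩ := hcomp1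
  obtain ⟨r₂, hr₂, hc₂⟩ := hcomp2
  obtain ⟨U₁, hU₁, V₁, hV₁, hreg⟩ := hreg
  obtain ⟨U₂, hU₂, V₂, hV₂, hAub⟩ := hAub
  have hsmall : ∀ᶠ δ in 𝓝 (0 : ℝ), ((ball x₀ δ ⊆ U₁ ∧ ball x₀ δ ⊆ U₂) ∧
      ball y₁ δ ⊆ V₁ ∧ ball y₂ δ ⊆ V₂) ∧ δ ≤ r₁ ∧ δ ≤ r₂ :=
    (((eventually_ball_subset hU₁).and (eventually_ball_subset hU₂)).and
      ((eventually_ball_subset hV₁).and (eventually_ball_subset hV₂))).and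
      ((eventually_le_nhds hr₁).and (eventually_le_nhds hr₂))
  obtain ⟨δ, hδ, ⟨⟨hδU₁, hδU₂⟩, hδV₁, hδV₂⟩, hδr₁, hδr₂⟩ :=
    ((eventually_mem_nhdsWithin (s := Ioi 0)).and (nhdsWithin_le_nhds hsmall)).exists
  refine ⟨min δ (l * δ), lt_min hδ (mul_pos hl hδ), fun ρ hρ y hy => ?_⟩
  obtain ⟨x, hx, z, hz, hyz⟩ := SetValued.exists_add_mem_of_dist_lt hl hm hlm
    (SetValued.MetricRegularOn.mono hreg hδU₁ hδV₁)
    (SetValued.AubinOn.mono hAub hδU₂ hδV₂)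
    hc₁ (closedBall_subset_closedBall hδr₁) hc₂ (closedBall_subset_closedBall hδr₂) h1 h2
    (hρ.2.le.trans (min_le_left _ _)) (hρ.2.le.trans (min_le_right _ _)) (mem_ball.1 hy)
  exact mem_iUnion₂.2 ⟨x, hx, (y + z, z), ⟨hyz, hz⟩, add_sub_cancel_right y z⟩
end

section
/- Define F : ℝ ⇒ ℝ by F(x) = [0,1] if x ≠ 1 and F(1) = [0,1] ∪ {2}, and G : ℝ ⇒ ℝ by G(y) = [y, 1) if y < 1, G(1) = {1}, G(y) = (1, y] if y > 1. Then F has the Aubin property around (1, 1) and G has the Aubin property around (1, 1), but the composition G∘F, which equals (G∘F)(x) = [0,1] for x ≠ 1 and (G∘F)(1) = [0,2], does NOT have the Aubin property around (1, 1). -/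
open Set Topology

def AubinIcc (H : ℝ → Set ℝ) (xa za : ℝ) : Prop :=
  ∃ L > (0:ℝ), ∃ α > (0:ℝ), ∀ x ∈ Set.Icc (xa - α) (xa + α),
    ∀ u ∈ Set.Icc (xa - α) (xa + α),
      ∀ v ∈ H x ∩ Set.Icc (za - α) (za + α), ∃ w ∈ H u, |v - w| ≤ L * |x - u|

noncomputable def Fex : ℝ → Set ℝ := fun x =>
  if x = 1 then Set.Icc 0 1 ∪ {2} else Set.Icc 0 1

noncomputable def Gex : ℝ → Set ℝ := fun y =>
  if y < 1 then Set.Ico y 1 else if y = 1 then {1} else Set.Ioc 1 y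

lemma Gex_lt {y : ℝ} (h : y < 1) : Gex y = Set.Ico y 1 := by simp [Gex, h]
lemma Gex_one : Gex 1 = {1} := by simp [Gex]
lemma Gex_gt {y : ℝ} (h : 1 < y) : Gex y = Set.Ioc 1 y := by
  simp [Gex, not_lt.mpr h.le, h.ne']

lemma GU : (⋃ y ∈ Set.Icc (0:ℝ) 1, Gex y) = Set.Icc 0 1 := by
  ext z
  simp only [mem_iUnion, exists_prop, mem_Icc]
  constructor
  · rintro ⟨y, ⟨hy0, hy1⟩, hz⟩
    rcases lt_or_eq_of_le hy1 with h | h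
    · rw [Gex_lt h] at hz
      exact ⟨hy0.trans hz.1, hz.2.le⟩
    · subst h; rw [Gex_one] at hz; simp at hz; simp [hz]
  · rintro ⟨h0, h1⟩
    rcases lt_or_eq_of_le h1 with h | h
    · exact ⟨z, ⟨h0, h1⟩, by rw [Gex_lt h]; exact ⟨le_refl z, h⟩⟩
    · exact ⟨1, ⟨zero_le_one, le_refl 1⟩, by rw [Gex_one]; simp [h]⟩

lemma comp_ne {x : ℝ} (hx : x ≠ 1) : (⋃ y ∈ Fex x, Gex y) = Set.Icc 0 1 := by
  rw [show Fex x = Set.Icc 0 1 from by simp [Fex, hx]]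
  exact GU

lemma comp_one : (⋃ y ∈ Fex 1, Gex y) = Set.Icc 0 2 := by
  have h1 : Fex 1 = Set.Icc 0 1 ∪ {2} := by simp [Fex]
  rw [h1, Set.biUnion_union, GU, Set.biUnion_singleton,
    Gex_gt (by norm_num : (1:ℝ) < 2)]
  exact Set.Icc_union_Ioc_eq_Icc zero_le_one one_le_two

lemma aubinF : AubinIcc Fex 1 1 := by
  refine ⟨1, one_pos, 1/2, by norm_num, ?_⟩
  intro x _ u _ v hv
  have hv1 : v ∈ Set.Icc (0:ℝ) 1 := by
    obtain ⟨hvF, hvI⟩ := hv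
    unfold Fex at hvF
    split_ifs at hvF with h
    · rcases hvF with h1 | h2
      · exact h1
      · exfalso
        simp only [mem_singleton_iff] at h2
        rw [h2] at hvI
        simp only [mem_Icc] at hvI
        norm_num at hvI
    · exact hvF
  refine ⟨v, ?_, by simp⟩
  unfold Fex
  split_ifs with h
  · exact Or.inl hv1
  · exact hv1

lemma aubinG : AubinIcc Gex 1 1 := by
  refine ⟨1, one_pos, 1, one_pos, ?_⟩
  intro x _ u _ v hv
  obtain ⟨hvG, _⟩ := hv
  have hxu : x - u ≤ |x - u| := le_abs_self _
  have hux : u - x ≤ |x - u| := by rw [abs_sub_comm]; exact le_abs_self _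
  rw [one_mul]
  rcases lt_trichotomy u 1 with hu1 | hu1 | hu1
  · rw [Gex_lt hu1]
    by_cases hv1 : v < 1
    · have hx1 : x < 1 := by
        rcases lt_trichotomy x 1 with h | h | h
        · exact h
        · exfalso; subst h; rw [Gex_one] at hvG
          simp only [mem_singleton_iff] at hvG; linarith
        · exfalso; rw [Gex_gt h] at hvG; exact absurd hvG.1 (by linarith)
      rw [Gex_lt hx1] at hvG
      rcases le_total u v with h | h
      · exact ⟨v, ⟨h, hv1⟩, by simp⟩
      · refine ⟨u, ⟨le_refl u, hu1⟩, ?_⟩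
        rw [abs_of_nonpos (by linarith)]
        have := hvG.1
        linarith
    · push_neg at hv1
      have hvx : v ≤ x := by
        rcases lt_trichotomy x 1 with h | h | h
        · exfalso; rw [Gex_lt h] at hvG; linarith [hvG.2]
        · subst h; rw [Gex_one] at hvG
          simp only [mem_singleton_iff] at hvG; linarith
        · rw [Gex_gt h] at hvG; exact hvG.2
      refine ⟨u, ⟨le_refl u, hu1⟩, ?_⟩
      rw [abs_of_nonneg (by linarith)]
      linarith
  · subst hu1
    rw [Gex_one]
    refine ⟨1, mem_singleton 1, ?_⟩
    rcases lt_trichotomy x 1 with h | h | h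
    · rw [Gex_lt h] at hvG
      rw [abs_of_nonpos (by linarith [hvG.2])]
      linarith [hvG.1, hux]
    · subst h; rw [Gex_one] at hvG
      simp only [mem_singleton_iff] at hvG
      simp [hvG]
    · rw [Gex_gt h] at hvG
      rw [abs_of_nonneg (by linarith [hvG.1])]
      linarith [hvG.2, hxu]
  · rw [Gex_gt hu1]
    by_cases hv1 : 1 < v
    · have hvx : v ≤ x := by
        rcases lt_trichotomy x 1 with h | h | h
        · exfalso; rw [Gex_lt h] at hvG; linarith [hvG.2]
        · exfalso; subst h; rw [Gex_one] at hvG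
          simp only [mem_singleton_iff] at hvG; linarith
        · rw [Gex_gt h] at hvG; exact hvG.2
      rcases le_total v u with h | h
      · exact ⟨v, ⟨hv1, h⟩, by simp⟩
      · refine ⟨u, ⟨hu1, le_refl u⟩, ?_⟩
        rw [abs_of_nonneg (by linarith)]
        linarith
    · push_neg at hv1
      have hxv : x ≤ v := by
        rcases lt_trichotomy x 1 with h | h | h
        · rw [Gex_lt h] at hvG; exact hvG.1
        · subst h; rw [Gex_one] at hvG
          simp only [mem_singleton_iff] at hvG; linarith
        · exfalso; rw [Gex_gt h] at hvG; linarith [hvG.1]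
      refine ⟨u, ⟨hu1, le_refl u⟩, ?_⟩
      rw [abs_of_nonpos (by linarith)]
      linarith

lemma notAubinComp : ¬ AubinIcc (fun x => ⋃ y ∈ Fex x, Gex y) 1 1 := by
  rintro ⟨L, hL, α, hα, h⟩
  set γ : ℝ := min α 1 with hγdef
  have hγ : 0 < γ := lt_min hα one_pos
  have hγα : γ ≤ α := min_le_left _ _
  have hγ1 : γ ≤ 1 := min_le_right _ _
  set η : ℝ := min α (γ / (2 * L)) with hηdef
  have hη : 0 < η := lt_min hα (by positivity)
  have hηα : η ≤ α := min_le_left _ _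
  have hηγ : η ≤ γ / (2 * L) := min_le_right _ _
  have hx : (1:ℝ) ∈ Set.Icc (1 - α) (1 + α) := by
    constructor <;> linarith
  have hu : (1 + η) ∈ Set.Icc (1 - α) (1 + α) := by
    constructor <;> linarith
  have hvmem : (1 + γ) ∈ (⋃ y ∈ Fex 1, Gex y) ∩ Set.Icc (1 - α) (1 + α) := by
    constructor
    · rw [comp_one]; constructor <;> linarith
    · constructor <;> linarith
  obtain ⟨w, hw, hwd⟩ := h 1 hx (1 + η) hu (1 + γ) hvmem
  simp only [] at hw
  rw [comp_ne (by intro hc; nlinarith)] at hw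
  have hw1 : w ≤ 1 := hw.2
  have habs : |1 - (1 + η)| = η := by
    rw [show (1:ℝ) - (1 + η) = -η by ring, abs_neg, abs_of_pos hη]
  rw [habs] at hwd
  have h1 : γ ≤ |1 + γ - w| := by
    rw [abs_of_nonneg (by linarith)]
    linarith
  have h2 : L * η ≤ γ / 2 := by
    have : L * η ≤ L * (γ / (2 * L)) := by
      apply mul_le_mul_of_nonneg_left hηγ hL.le
    rw [mul_div_assoc'] at this
    calc L * η ≤ L * γ / (2 * L) := this
      _ = γ / 2 := by field_simp
  linarith

theorem stmt11 :
    AubinIcc Fex 1 1 ∧ AubinIcc Gex 1 1 ∧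
    (∀ x : ℝ, x ≠ 1 → (⋃ y ∈ Fex x, Gex y) = Set.Icc 0 1) ∧
    (⋃ y ∈ Fex 1, Gex y) = Set.Icc 0 2 ∧
    ¬ AubinIcc (fun x => ⋃ y ∈ Fex x, Gex y) 1 1 := by
  exact ⟨aubinF, aubinG, fun x hx => comp_ne hx, comp_one, notAubinComp⟩
end

section
/- With F, G as follows: F : ℝ ⇒ ℝ, F(x) = [0,1] for x ≠ 1, F(1) = [0,1] ∪ {2}; G : ℝ ⇒ ℝ, G(y) = [y,1) for y < 1, G(1) = {1}, G(y) = (1,y] for y > 1. The pair (F, G) is NOT locally composition-stable around (1, 1, 1): there exists ε ∈ (0, 1/2) such that for every δ > 0 there exist x ∈ B(1, δ) and z ∈ (G∘F)(x) ∩ B(1, δ) such that no y ∈ F(x) ∩ B(1, ε) satisfies z ∈ G(y). -/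
open Set Metric

theorem stmt12 :
    ∃ ε ∈ Set.Ioo (0:ℝ) (1/2), ∀ δ > (0:ℝ), ∃ x ∈ Metric.ball (1:ℝ) δ,
      ∃ z ∈ (⋃ y ∈ Fex x, Gex y) ∩ Metric.ball (1:ℝ) δ,
        ∀ y ∈ Fex x ∩ Metric.ball (1:ℝ) ε, z ∉ Gex y := by
  refine ⟨1/4, by norm_num, fun δ hδ => ?_⟩
  refine ⟨1, by simp [hδ], 1 + min δ 1 / 2, ⟨?_, ?_⟩, ?_⟩
  · refine mem_iUnion₂.2 ⟨2, ?_, ?_⟩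
    · simp [Fex]
    · have h1 : min δ 1 ≤ 1 := min_le_right _ _
      have h0 : 0 < min δ 1 := lt_min hδ one_pos
      simp only [Gex]
      rw [if_neg (by linarith), if_neg (by linarith)]
      constructor <;> [linarith; linarith]
  · have h1 : min δ 1 ≤ δ := min_le_left _ _
    have h0 : 0 < min δ 1 := lt_min hδ one_pos
    simp only [Metric.mem_ball, Real.dist_eq]
    rw [abs_of_nonneg (by linarith)]
    linarith
  · rintro y ⟨hyF, hyB⟩ hz
    have h1 : min δ 1 ≤ 1 := min_le_right _ _
    have h0 : 0 < min δ 1 := lt_min hδ one_pos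
    simp only [Metric.mem_ball, Real.dist_eq] at hyB
    have hy2 : y ≠ 2 := by
      intro h; rw [h] at hyB; rw [abs_of_nonneg (by norm_num)] at hyB; norm_num at hyB
    have hy1 : y ≤ 1 := by
      simp only [Fex, if_pos rfl, mem_union, mem_Icc, mem_singleton_iff] at hyF
      rcases hyF with ⟨_, h⟩ | h
      · exact h
      · exact absurd h hy2
    simp only [Gex] at hz
    rcases lt_or_eq_of_le hy1 with h | h
    · rw [if_pos h] at hz
      exact absurd hz.2 (by linarith)
    · rw [if_neg (by linarith), if_pos h, mem_singleton_iff] at hz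
      linarith
end

section
/- Let X, P be metric spaces, W a normed vector space, H : X × P ⇒ W, and (x̄, p̄) with 0 ∈ H(x̄, p̄). Define S : P ⇒ X by S(p) := {x ∈ X : 0 ∈ H(x, p)}. If H is open at linear rate c > 0 with respect to x uniformly in p around ((x̄, p̄), 0), then there exist α, β, γ > 0 such that for every (x, p) ∈ B(x̄, α) × B(p̄, β), d(x, S(p)) ≤ c⁻¹ · d(0, H(x, p) ∩ B(0, γ)). -/
/-! Given `w ∈ H(x, p)` close to `0`, openness at rate `c` applied with any radius `ρ > ‖w‖ / c`
puts `0` in `H(x', p)` for some `x'` with `d(x, x') < ρ`; letting `ρ` decrease to `‖w‖ / c` gives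
`d(x, S(p)) ≤ c⁻¹ ‖w‖`, and taking the infimum over `w` gives the estimate. -/

open Metric Set Filter Topology

theorem le_mul_infEDist_of_forall_mem {E : Type*} [PseudoEMetricSpace E] {a k : ENNReal} {x : E}
    {s : Set E} (hk₀ : k ≠ 0) (hk : k ≠ ⊤) (h : ∀ y ∈ s, a ≤ k * edist x y) :
    a ≤ k * infEDist x s := by
  rw [← ENNReal.div_le_iff' hk₀ hk, le_infEDist]
  exact fun y hy => (ENNReal.div_le_iff' hk₀ hk).2 (h y hy)

section OpenAtLinearRate

variable {X W : Type*} [PseudoMetricSpace X] [SeminormedAddCommGroup W]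

theorem infEDist_zeroSet_le_of_ball_subset {F : X → Set W} {x : X} {w : W} {ρ c : ℝ}
    (hwρ : ‖w‖ < c * ρ) (hball : ball w (c * ρ) ⊆ ⋃ x' ∈ ball x ρ, F x') :
    infEDist x {x' | (0 : W) ∈ F x'} ≤ ENNReal.ofReal ρ := by
  have h0 : (0 : W) ∈ ball w (c * ρ) := by rwa [mem_ball, dist_zero_left]
  obtain ⟨x', hx', hx'F⟩ := mem_iUnion₂.1 (hball h0)
  calc infEDist x {x' | (0 : W) ∈ F x'} ≤ edist x x' := infEDist_le_edist_of_mem hx'F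
    _ ≤ ENNReal.ofReal ρ := by
      rw [edist_dist, dist_comm]
      exact ENNReal.ofReal_le_ofReal (mem_ball.1 hx').le

theorem infEDist_zeroSet_le_of_openAtRate {F : X → Set W} {x : X} {w : W} {c ε : ℝ}
    (hc : 0 < c) (hw : ‖w‖ < c * ε)
    (hopen : ∀ ρ ∈ Ioo (0 : ℝ) ε, ball w (c * ρ) ⊆ ⋃ x' ∈ ball x ρ, F x') :
    infEDist x {x' | (0 : W) ∈ F x'} ≤ ENNReal.ofReal c⁻¹ * edist (0 : W) w := by
  have hwε : c⁻¹ * ‖w‖ < ε := by rwa [inv_mul_lt_iff₀ hc]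
  have hbound : ∀ ρ ∈ Ioo (c⁻¹ * ‖w‖) ε,
      infEDist x {x' | (0 : W) ∈ F x'} ≤ ENNReal.ofReal ρ := by
    rintro ρ ⟨hwρ, hρε⟩
    have hρ : 0 < ρ := (by positivity : 0 ≤ c⁻¹ * ‖w‖).trans_lt hwρ
    exact infEDist_zeroSet_le_of_ball_subset (by rwa [inv_mul_lt_iff₀ hc] at hwρ)
      (hopen ρ ⟨hρ, hρε⟩)
  rw [edist_comm, edist_dist, dist_zero_right, ← ENNReal.ofReal_mul (by positivity)]
  exact ge_of_tendsto (ENNReal.continuous_ofReal.tendsto _ |>.mono_left nhdsWithin_le_nhds)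
    (eventually_of_mem (Ioo_mem_nhdsGT hwε) hbound)

end OpenAtLinearRate

theorem stmt13_general {X P W : Type*} [MetricSpace X] [MetricSpace P]
    [NormedAddCommGroup W]
    (H : X → P → Set W) (x₀ : X) (p₀ : P)
    (c : ℝ) (hc : 0 < c)
    (hopen : ∃ ε > (0:ℝ), ∃ U ∈ 𝓝 x₀, ∃ V ∈ 𝓝 p₀, ∃ W₀ ∈ 𝓝 (0:W),
      ∀ ρ ∈ Set.Ioo (0:ℝ) ε, ∀ p ∈ V, ∀ x ∈ U, ∀ w ∈ H x p ∩ W₀,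
        Metric.ball w (c * ρ) ⊆ ⋃ x' ∈ Metric.ball x ρ, H x' p) :
    ∃ α > (0:ℝ), ∃ β > (0:ℝ), ∃ γ > (0:ℝ),
      ∀ x ∈ Metric.ball x₀ α, ∀ p ∈ Metric.ball p₀ β,
        EMetric.infEdist x {x' | (0:W) ∈ H x' p} ≤
          ENNReal.ofReal c⁻¹ *
            EMetric.infEdist (0:W) (H x p ∩ Metric.ball (0:W) γ) := by
  obtain ⟨ε, hε, U, hU, V, hV, W₀, hW₀, hkey⟩ := hopen
  obtain ⟨α, hα, hαU⟩ := Metric.mem_nhds_iff.1 hU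
  obtain ⟨β, hβ, hβV⟩ := Metric.mem_nhds_iff.1 hV
  obtain ⟨γ, hγ, hγW₀⟩ := Metric.mem_nhds_iff.1 hW₀
  refine ⟨α, hα, β, hβ, min γ (c * ε), by positivity, fun x hx p hp => ?_⟩
  refine le_mul_infEDist_of_forall_mem (by simpa using hc) ENNReal.ofReal_ne_top ?_
  rintro w ⟨hwH, hw⟩
  rw [mem_ball_zero_iff, lt_min_iff] at hw
  exact infEDist_zeroSet_le_of_openAtRate hc hw.2 fun ρ hρ =>
    hkey ρ hρ p (hβV hp) x (hαU hx) w ⟨hwH, hγW₀ (mem_ball_zero_iff.2 hw.1)⟩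

theorem stmt13 {X P W : Type*} [MetricSpace X] [MetricSpace P]
    [NormedAddCommGroup W]
    (H : X → P → Set W) (x₀ : X) (p₀ : P) (h0 : (0:W) ∈ H x₀ p₀)
    (c : ℝ) (hc : 0 < c)
    (hopen : ∃ ε > (0:ℝ), ∃ U ∈ 𝓝 x₀, ∃ V ∈ 𝓝 p₀, ∃ W₀ ∈ 𝓝 (0:W),
      ∀ ρ ∈ Set.Ioo (0:ℝ) ε, ∀ p ∈ V, ∀ x ∈ U, ∀ w ∈ H x p ∩ W₀,
        Metric.ball w (c * ρ) ⊆ ⋃ x' ∈ Metric.ball x ρ, H x' p) :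
    ∃ α > (0:ℝ), ∃ β > (0:ℝ), ∃ γ > (0:ℝ),
      ∀ x ∈ Metric.ball x₀ α, ∀ p ∈ Metric.ball p₀ β,
        EMetric.infEdist x {x' | (0:W) ∈ H x' p} ≤
          ENNReal.ofReal c⁻¹ *
            EMetric.infEdist (0:W) (H x p ∩ Metric.ball (0:W) γ) :=
  stmt13_general H x₀ p₀ c hc hopen
end

section
/- Let X, P be metric spaces, W a normed vector space, H : X × P ⇒ W with 0 ∈ H(x̄, p̄), and S(p) := {x : 0 ∈ H(x, p)}. Suppose (a) there exist α, β, γ, c > 0 such that d(x, S(p)) ≤ c⁻¹ d(0, H(x, p) ∩ B(0, γ)) for all (x, p) ∈ B(x̄, α) × B(p̄, β), and (b) H has the Aubin property with respect to p uniformly in x around ((x̄, p̄), 0) with constant k > 0. Then S has the Aubin property around (p̄, x̄), and moreover lip S(p̄, x̄) ≤ c⁻¹ k. -/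
open Metric Set Filter Topology ENNReal

/-!
If `x ∈ S(p₁)` is close to `x̄`, then `0 ∈ H(x, p₁) ∩ W₀`, so the Aubin property of `H` puts a point
of `H(x, p₂)` within `k d(p₁, p₂)` of `0`. For `p₁, p₂` close to `p̄` this is less than `γ`, so the
point also lies in `B(0, γ)`, and the regularity estimate (a) at `(x, p₂)` gives
`d(x, S(p₂)) ≤ c⁻¹ k d(p₁, p₂)`.
-/

lemma ENNReal.ofReal_mul_ofReal_le (a b : ℝ) :
    ENNReal.ofReal a * ENNReal.ofReal b ≤ ENNReal.ofReal (a * b) := by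
  rcases le_or_gt 0 a with ha | ha
  · exact (ENNReal.ofReal_mul ha).ge
  · simp [ENNReal.ofReal_of_nonpos ha.le]

lemma Metric.infEDist_inter_eball_of_lt {α : Type*} [PseudoEMetricSpace α] {x : α} {s : Set α}
    {r : ℝ≥0∞} (h : infEDist x s < r) : infEDist x (s ∩ eball x r) = infEDist x s := by
  refine le_antisymm (le_of_forall_gt fun b hb => ?_) (infEDist_anti inter_subset_left)
  obtain ⟨y, hys, hy⟩ := infEDist_lt_iff.mp (lt_min hb h)
  have hy_mem : y ∈ s ∩ eball x r := ⟨hys, mem_eball'.mpr (hy.trans_le (min_le_right _ _))⟩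
  exact (infEDist_le_edist_of_mem hy_mem).trans_lt (hy.trans_le (min_le_left _ _))

lemma Metric.infEDist_inter_ball_le_of_le {E : Type*} [PseudoMetricSpace E] {z : E} {T : Set E}
    {r γ : ℝ} (hT : infEDist z T ≤ ENNReal.ofReal r) (hr : r < γ) (hγ : 0 < γ) :
    infEDist z (T ∩ ball z γ) ≤ ENNReal.ofReal r := by
  rwa [← eball_ofReal, infEDist_inter_eball_of_lt
    (hT.trans_lt ((ENNReal.ofReal_lt_ofReal_iff hγ).mpr hr))]

theorem stmt14_general {X P W : Type*} [MetricSpace X] [MetricSpace P]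
    [NormedAddCommGroup W]
    (H : X → P → Set W) (x₀ : X) (p₀ : P)
    (c k : ℝ)
    (ha : ∃ α > (0:ℝ), ∃ β > (0:ℝ), ∃ γ > (0:ℝ),
      ∀ x ∈ Metric.ball x₀ α, ∀ p ∈ Metric.ball p₀ β,
        EMetric.infEdist x {x' | (0:W) ∈ H x' p} ≤
          ENNReal.ofReal c⁻¹ *
            EMetric.infEdist (0:W) (H x p ∩ Metric.ball (0:W) γ))
    (hb : ∃ U ∈ 𝓝 x₀, ∃ V ∈ 𝓝 p₀, ∃ W₀ ∈ 𝓝 (0:W), ∀ x ∈ U, ∀ p₁ ∈ V, ∀ p₂ ∈ V,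
      exc (H x p₁ ∩ W₀) (H x p₂) ≤ ENNReal.ofReal (k * dist p₁ p₂)) :
    ∃ V' ∈ 𝓝 p₀, ∃ U' ∈ 𝓝 x₀, ∀ p₁ ∈ V', ∀ p₂ ∈ V',
      exc ({x | (0:W) ∈ H x p₁} ∩ U') {x | (0:W) ∈ H x p₂} ≤
        ENNReal.ofReal (c⁻¹ * k * dist p₁ p₂) := by
  obtain ⟨α, hα, β, hβ, γ, hγ, hreg⟩ := ha
  obtain ⟨U, hU, V, hV, W₀, hW₀, hAubin⟩ := hb
  have hsmall : ∀ᶠ q in 𝓝 p₀ ×ˢ 𝓝 p₀, k * dist q.1 q.2 < γ := by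
    rw [← nhds_prod_eq]
    refine (Continuous.tendsto (by fun_prop) (p₀, p₀)).eventually (gt_mem_nhds ?_)
    simpa using hγ
  obtain ⟨t, ht, htt⟩ := mem_prod_self_iff.mp hsmall
  refine ⟨t ∩ V ∩ ball p₀ β, inter_mem (inter_mem ht hV) (ball_mem_nhds _ hβ),
    U ∩ ball x₀ α, inter_mem hU (ball_mem_nhds _ hα), ?_⟩
  rintro p₁ ⟨⟨hp₁t, hp₁V⟩, -⟩ p₂ ⟨⟨hp₂t, hp₂V⟩, hp₂β⟩
  refine iSup₂_le ?_
  rintro x ⟨hx, hxU, hxα⟩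
  have hnear : infEDist (0:W) (H x p₂) ≤ ENNReal.ofReal (k * dist p₁ p₂) :=
    (infEDist_le_exc (A := H x p₁ ∩ W₀) ⟨hx, mem_of_mem_nhds hW₀⟩).trans
      (hAubin x hxU p₁ hp₁V p₂ hp₂V)
  calc infEDist x {x' | (0:W) ∈ H x' p₂}
      ≤ ENNReal.ofReal c⁻¹ * infEDist (0:W) (H x p₂ ∩ ball 0 γ) := hreg x hxα p₂ hp₂β
    _ ≤ ENNReal.ofReal c⁻¹ * ENNReal.ofReal (k * dist p₁ p₂) := by
        gcongr
        exact infEDist_inter_ball_le_of_le hnear (htt (mk_mem_prod hp₁t hp₂t)) hγ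
    _ ≤ ENNReal.ofReal (c⁻¹ * k * dist p₁ p₂) := by
        rw [mul_assoc]
        exact ENNReal.ofReal_mul_ofReal_le _ _

theorem stmt14 {X P W : Type*} [MetricSpace X] [MetricSpace P]
    [NormedAddCommGroup W]
    (H : X → P → Set W) (x₀ : X) (p₀ : P) (h0 : (0:W) ∈ H x₀ p₀)
    (c k : ℝ) (hc : 0 < c) (hk : 0 < k)
    (ha : ∃ α > (0:ℝ), ∃ β > (0:ℝ), ∃ γ > (0:ℝ),
      ∀ x ∈ Metric.ball x₀ α, ∀ p ∈ Metric.ball p₀ β,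
        EMetric.infEdist x {x' | (0:W) ∈ H x' p} ≤
          ENNReal.ofReal c⁻¹ *
            EMetric.infEdist (0:W) (H x p ∩ Metric.ball (0:W) γ))
    (hb : ∃ U ∈ 𝓝 x₀, ∃ V ∈ 𝓝 p₀, ∃ W₀ ∈ 𝓝 (0:W), ∀ x ∈ U, ∀ p₁ ∈ V, ∀ p₂ ∈ V,
      exc (H x p₁ ∩ W₀) (H x p₂) ≤ ENNReal.ofReal (k * dist p₁ p₂)) :
    ∃ V' ∈ 𝓝 p₀, ∃ U' ∈ 𝓝 x₀, ∀ p₁ ∈ V', ∀ p₂ ∈ V',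
      exc ({x | (0:W) ∈ H x p₁} ∩ U') {x | (0:W) ∈ H x p₂} ≤
        ENNReal.ofReal (c⁻¹ * k * dist p₁ p₂) :=
  stmt14_general H x₀ p₀ c k ha hb
end

section
/- Let Y be a vector space with a shift-invariant metric, Z a metric space, R : Y ⇒ Y and T : Z ⇒ Y multifunctions. If R is open at linear rate C > 0 around (ȳ, w̄₁) and (R, T) is locally sum-stable around (z̄, ȳ, w̄₁, w̄₂), then G(y, z) := R(y) + T(z) is open at linear rate C with respect to y uniformly in z around ((ȳ, z̄), w̄₁ + w̄₂): there exist ε > 0 and neighborhoods U' of ȳ, V of z̄, W' of w̄₁ + w̄₂ such that for every θ ∈ (0, ε), z ∈ V, and (y, w) with y ∈ U', w ∈ (R(y) + T(z)) ∩ W', one has B(w, Cθ) ⊆ R(B(y, θ)) + T(z). -/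
open Metric Set Filter Topology Pointwise

theorem stmt17 {Y Z : Type*} [AddCommGroup Y] [MetricSpace Y] [MetricSpace Z]
    (hshift : ∀ a b c : Y, dist (a + c) (b + c) = dist a b)
    (R : Y → Set Y) (T : Z → Set Y)
    (ya w₁ : Y) (za : Z) (w₂ : Y)
    (hR : w₁ ∈ R ya) (hT : w₂ ∈ T za)
    (C : ℝ) (hC : 0 < C)
    (hopenR : ∃ ν > (0:ℝ), ∃ U ∈ 𝓝 ya, ∃ W₁ ∈ 𝓝 w₁, ∀ θ ∈ Set.Ioo (0:ℝ) ν,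
      ∀ y w, w ∈ R y → y ∈ U → w ∈ W₁ →
        Metric.ball w (C * θ) ⊆ ⋃ y' ∈ Metric.ball y θ, R y')
    (hstab : ∀ ε > (0:ℝ), ∃ δ > (0:ℝ), ∀ z ∈ Metric.ball za δ, ∀ y ∈ Metric.ball ya δ,
      ∀ w ∈ (R y + T z) ∩ Metric.ball (w₁ + w₂) δ,
        ∃ a ∈ R y ∩ Metric.ball w₁ ε, ∃ b ∈ T z ∩ Metric.ball w₂ ε, w = a + b) :
    ∃ ε > (0:ℝ), ∃ U' ∈ 𝓝 ya, ∃ V ∈ 𝓝 za, ∃ W' ∈ 𝓝 (w₁ + w₂),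
      ∀ θ ∈ Set.Ioo (0:ℝ) ε, ∀ z ∈ V, ∀ y ∈ U', ∀ w ∈ (R y + T z) ∩ W',
        Metric.ball w (C * θ) ⊆ (⋃ y' ∈ Metric.ball y θ, R y') + T z := by
  obtain ⟨ν, hν, U, hU, W₁, hW₁, hopen⟩ := hopenR
  obtain ⟨ε₁, hε₁, hballW⟩ := Metric.mem_nhds_iff.mp hW₁
  obtain ⟨δ, hδ, hst⟩ := hstab ε₁ hε₁
  refine ⟨ν, hν, U ∩ Metric.ball ya δ,
    Filter.inter_mem hU (Metric.ball_mem_nhds _ hδ),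
    Metric.ball za δ, Metric.ball_mem_nhds _ hδ,
    Metric.ball (w₁ + w₂) δ, Metric.ball_mem_nhds _ hδ, ?_⟩
  rintro θ hθ z hz y ⟨hyU, hyδ⟩ w ⟨hwRT, hwδ⟩ v hv
  obtain ⟨a, ⟨haR, haB⟩, b, ⟨hbT, _⟩, rfl⟩ := hst z hz y hyδ w ⟨hwRT, hwδ⟩
  have hdist : dist (v - b) a = dist v (a + b) := by
    rw [← hshift (v - b) a b, sub_add_cancel]
  have hvb : v - b ∈ Metric.ball a (C * θ) := by
    rw [Metric.mem_ball, hdist]; exact hv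
  have := hopen θ hθ y a haR hyU (hballW haB) hvb
  exact ⟨v - b, this, b, hbT, sub_add_cancel v b⟩
end

section
/- Let X, P, Y, Z be metric spaces, W a normed vector space, F₁ : X ⇒ Y, F₂ : X × P ⇒ Z, G : Y × Z ⇒ W, with ȳ ∈ F₁(x̄), z̄ ∈ F₂(x̄, p̄), 0 ∈ G(ȳ, z̄). Define H(x, p) := ⋃{G(y, z) : y ∈ F₁(x), z ∈ F₂(x, p)} and S(p) := {x : 0 ∈ H(x, p)}. Suppose: (i) the pair ((F₁, F₂), G) is locally composition-stable around ((x̄, p̄), (ȳ, z̄), 0); (ii) F₂ is open at linear rate L⁻¹ > 0 with respect to p uniformly in x around ((x̄, p̄), z̄), in the sense that for suitable ε and neighborhoods, B(z, ρ) ⊆ F₂(x, B(p, Lρ)) for (p, z) in the graph of F₂(x, ·) near (p̄, z̄); (iii) G is open at linear rate C > 0 with respect to z uniformly in y around ((ȳ, z̄), 0). Then H is open at linear rate C·L⁻¹ with respect to p uniformly in x around ((x̄, p̄), 0): there exist ε', δ > 0 such that for every x ∈ B(x̄, δ), every (p, w) with w ∈ H(x, p), p ∈ B(p̄, δ), w ∈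 B(0, δ), and every ρ ∈ (0, ε'), one has B(w, Cρ) ⊆ H(x, B(p, Lρ)). -/
open Metric Set Filter Topology

theorem stmt19 {X P Y Z W : Type*} [MetricSpace X] [MetricSpace P] [MetricSpace Y]
    [MetricSpace Z] [NormedAddCommGroup W]
    (F₁ : X → Set Y) (F₂ : X → P → Set Z) (G : Y → Z → Set W)
    (x₀ : X) (p₀ : P) (y₀ : Y) (z₀ : Z)
    (h1 : y₀ ∈ F₁ x₀) (h2 : z₀ ∈ F₂ x₀ p₀) (h3 : (0:W) ∈ G y₀ z₀)
    (L C : ℝ) (hL : 0 < L) (hC : 0 < C)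
    (hstab : ∀ ε > (0:ℝ), ∃ δ > (0:ℝ), ∀ x ∈ Metric.ball x₀ δ, ∀ p ∈ Metric.ball p₀ δ,
      ∀ w ∈ (⋃ y ∈ F₁ x, ⋃ z ∈ F₂ x p, G y z) ∩ Metric.ball (0:W) δ,
        ∃ y ∈ F₁ x ∩ Metric.ball y₀ ε, ∃ z ∈ F₂ x p ∩ Metric.ball z₀ ε, w ∈ G y z)
    (hopenF2 : ∃ ε > (0:ℝ), ∃ U ∈ 𝓝 x₀, ∃ V ∈ 𝓝 p₀, ∃ Z₀ ∈ 𝓝 z₀,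
      ∀ ρ ∈ Set.Ioo (0:ℝ) ε, ∀ x ∈ U, ∀ p ∈ V, ∀ z ∈ F₂ x p ∩ Z₀,
        Metric.ball z ρ ⊆ ⋃ p' ∈ Metric.ball p (L * ρ), F₂ x p')
    (hopenG : ∃ ε > (0:ℝ), ∃ UY ∈ 𝓝 y₀, ∃ VZ ∈ 𝓝 z₀, ∃ W₀ ∈ 𝓝 (0:W),
      ∀ ρ ∈ Set.Ioo (0:ℝ) ε, ∀ y ∈ UY, ∀ z ∈ VZ, ∀ w ∈ G y z ∩ W₀,
        Metric.ball w (C * ρ) ⊆ ⋃ z' ∈ Metric.ball z ρ, G y z') :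
    ∃ ε' > (0:ℝ), ∃ δ > (0:ℝ), ∀ x ∈ Metric.ball x₀ δ, ∀ p ∈ Metric.ball p₀ δ,
      ∀ w ∈ (⋃ y ∈ F₁ x, ⋃ z ∈ F₂ x p, G y z) ∩ Metric.ball (0:W) δ,
        ∀ ρ ∈ Set.Ioo (0:ℝ) ε',
          Metric.ball w (C * ρ) ⊆
            ⋃ p' ∈ Metric.ball p (L * ρ), ⋃ y ∈ F₁ x, ⋃ z ∈ F₂ x p', G y z := by
  obtain ⟨ε₂, hε₂, U, hU, V, hV, Z₀, hZ₀, hF2⟩ := hopenF2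
  obtain ⟨ε₃, hε₃, UY, hUY, VZ, hVZ, W₀, hW₀, hG⟩ := hopenG
  obtain ⟨ry, hry, hryUY⟩ := Metric.mem_nhds_iff.1 hUY
  obtain ⟨rz1, hrz1, hrzVZ⟩ := Metric.mem_nhds_iff.1 hVZ
  obtain ⟨rz2, hrz2, hrzZ₀⟩ := Metric.mem_nhds_iff.1 hZ₀
  set ε : ℝ := min ry (min rz1 rz2) with hεdef
  have hε : 0 < ε := lt_min hry (lt_min hrz1 hrz2)
  obtain ⟨δ₀, hδ₀, hstab'⟩ := hstab ε hε
  obtain ⟨rx, hrx, hrxU⟩ := Metric.mem_nhds_iff.1 hU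
  obtain ⟨rp, hrp, hrpV⟩ := Metric.mem_nhds_iff.1 hV
  obtain ⟨rw, hrw, hrwW₀⟩ := Metric.mem_nhds_iff.1 hW₀
  refine ⟨min ε₂ ε₃, lt_min hε₂ hε₃, min δ₀ (min rx (min rp rw)),
    lt_min hδ₀ (lt_min hrx (lt_min hrp hrw)), ?_⟩
  intro x hx p hp w hw ρ hρ w' hw'
  have hxU : x ∈ U := hrxU (Metric.mem_ball.2 (lt_of_lt_of_le (Metric.mem_ball.1 hx)
    ((min_le_right _ _).trans (min_le_left _ _))))
  have hpV : p ∈ V := hrpV (Metric.mem_ball.2 (lt_of_lt_of_le (Metric.mem_ball.1 hp)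
    ((min_le_right _ _).trans ((min_le_right _ _).trans (min_le_left _ _)))))
  have hwb : w ∈ (⋃ y ∈ F₁ x, ⋃ z ∈ F₂ x p, G y z) ∩ Metric.ball (0:W) δ₀ := by
    refine ⟨hw.1, Metric.mem_ball.2 (lt_of_lt_of_le (Metric.mem_ball.1 hw.2) (min_le_left _ _))⟩
  have hxδ : x ∈ Metric.ball x₀ δ₀ :=
    Metric.mem_ball.2 (lt_of_lt_of_le (Metric.mem_ball.1 hx) (min_le_left _ _))
  have hpδ : p ∈ Metric.ball p₀ δ₀ :=
    Metric.mem_ball.2 (lt_of_lt_of_le (Metric.mem_ball.1 hp) (min_le_left _ _))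
  obtain ⟨y, ⟨hyF, hyb⟩, z, ⟨hzF, hzb⟩, hwG⟩ := hstab' x hxδ p hpδ w hwb
  have hyUY : y ∈ UY := hryUY (Metric.mem_ball.2
    (lt_of_lt_of_le (Metric.mem_ball.1 hyb) (min_le_left _ _)))
  have hzVZ : z ∈ VZ := hrzVZ (Metric.mem_ball.2
    (lt_of_lt_of_le (Metric.mem_ball.1 hzb) ((min_le_right _ _).trans (min_le_left _ _))))
  have hzZ₀ : z ∈ Z₀ := hrzZ₀ (Metric.mem_ball.2
    (lt_of_lt_of_le (Metric.mem_ball.1 hzb) ((min_le_right _ _).trans (min_le_right _ _))))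
  have hwW₀ : w ∈ W₀ := hrwW₀ (Metric.mem_ball.2 (lt_of_lt_of_le (Metric.mem_ball.1 hw.2)
    ((min_le_right _ _).trans ((min_le_right _ _).trans (min_le_right _ _)))))
  have hρ₃ : ρ ∈ Set.Ioo (0:ℝ) ε₃ := ⟨hρ.1, lt_of_lt_of_le hρ.2 (min_le_right _ _)⟩
  have hρ₂ : ρ ∈ Set.Ioo (0:ℝ) ε₂ := ⟨hρ.1, lt_of_lt_of_le hρ.2 (min_le_left _ _)⟩
  have := hG ρ hρ₃ y hyUY z hzVZ w ⟨hwG, hwW₀⟩ hw'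
  simp only [Set.mem_iUnion] at this
  obtain ⟨z', hz'b, hw'G⟩ := this
  have := hF2 ρ hρ₂ x hxU p hpV z ⟨hzF, hzZ₀⟩ hz'b
  simp only [Set.mem_iUnion] at this
  obtain ⟨p', hp'b, hz'F⟩ := this
  simp only [Set.mem_iUnion]
  exact ⟨p', hp'b, y, hyF, z', hz'F, hw'G⟩
end
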